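/- In the averaging iteration A_0 = A, B_0 = B, A_{k+1} = (A_k + B_k)/2, B_{k+1} = 2(A_k^{-1} + B_k^{-1})^{-1} for Hermitian positive definite A, B, the monotonicity A_k ≽ A_{k+1} ≽ A#B ≽ B_{k+1} ≽ B_k holds for all k ≥ 1, where ≽ is the Loewner order. -/

import Mathlib

/-!
The geometric mean `G = A # B` is the positive definite solution of the Riccati equation
`G A⁻¹ G = B`, and the iteration preserves it: `B_k = G A_k⁻¹ G` for every `k`, because
`(A⁻¹ + (G A⁻¹ G)⁻¹)⁻¹ = G (A + G A⁻¹ G)⁻¹ G`. The congruence `X ↦ G X⁻¹ G` reverses the Loewner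
order and fixes `G`, so each inequality on the `B` side is the image of one on the `A` side.
These come from the matrix AM–GM inequality `(A + G A⁻¹ G)/2 - G = (A - G) A⁻¹ (A - G)/2 ≽ 0`,
which gives `A_{k+1} ≽ G ≽ B_{k+1}`, hence `B_k ≼ A_k` and `A_{k+1} = (A_k + B_k)/2 ≼ A_k`
for `k ≥ 1`.
-/

open Matrix ComplexOrder

namespace Matrix.PosSemidef

/-- The positive semidefinite square root of a positive semidefinite matrix
(the definition Mathlib had, since removed). -/
noncomputable def sqrt {n : Type*} {𝕜 : Type*} [Fintype n] [RCLike 𝕜] [DecidableEq n]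
    {A : Matrix n n 𝕜} (hA : A.PosSemidef) : Matrix n n 𝕜 :=
  hA.1.eigenvectorUnitary.1 * diagonal ((↑) ∘ (√·) ∘ hA.1.eigenvalues) *
  (star hA.1.eigenvectorUnitary : Matrix n n 𝕜)

lemma posSemidef_sqrt {n : Type*} {𝕜 : Type*} [Fintype n] [RCLike 𝕜] [DecidableEq n]
    {A : Matrix n n 𝕜} (hA : A.PosSemidef) : PosSemidef hA.sqrt := by
  apply PosSemidef.mul_mul_conjTranspose_same
  refine posSemidef_diagonal_iff.mpr fun i ↦ ?_
  rw [Function.comp_apply, RCLike.nonneg_iff]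
  constructor
  · simp only [RCLike.ofReal_re]
    exact Real.sqrt_nonneg _
  · simp only [RCLike.ofReal_im]

end Matrix.PosSemidef

lemma geomMean_aux {n : ℕ} {A B : Matrix (Fin n) (Fin n) ℂ} (hA : A.PosDef) (hB : B.PosDef) :
    ((hA.posSemidef.sqrt)⁻¹ * B * (hA.posSemidef.sqrt)⁻¹).PosSemidef := by
  have h := hB.posSemidef.conjTranspose_mul_mul_same (hA.posSemidef.sqrt)⁻¹
  rwa [(hA.posSemidef.posSemidef_sqrt.isHermitian.inv).eq] at h

/-- The geometric mean `A # B = A^{1/2} (A^{-1/2} B A^{-1/2})^{1/2} A^{1/2}` of two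
Hermitian positive definite matrices. -/
noncomputable def geomMean {n : ℕ} {A B : Matrix (Fin n) (Fin n) ℂ}
    (hA : A.PosDef) (hB : B.PosDef) : Matrix (Fin n) (Fin n) ℂ :=
  hA.posSemidef.sqrt * (geomMean_aux hA hB).sqrt * hA.posSemidef.sqrt

open scoped MatrixOrder

namespace Matrix

variable {n : Type*}

section Field

variable {K : Type*} [Field K]

def arithMean (A B : Matrix n n K) : Matrix n n K := (2 : K)⁻¹ • (A + B)

variable [Fintype n] [DecidableEq n]

noncomputable def harmMean (A B : Matrix n n K) : Matrix n n K := (2 : K) • (A⁻¹ + B⁻¹)⁻¹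

theorem inv_smul₀ (c : K) (X : Matrix n n K) : (c • X)⁻¹ = c⁻¹ • X⁻¹ := by
  rcases eq_or_ne c 0 with rfl | hc
  · simp
  have hc1 : (c • (1 : Matrix n n K))⁻¹ = c⁻¹ • 1 := by
    simpa [Units.smul_def] using inv_smul' (1 : Matrix n n K) (Units.mk0 c hc) (by simp)
  rw [← smul_one_mul c X, Matrix.mul_inv_rev, hc1, Matrix.mul_smul, mul_one]

theorem inv_add_inv_conj {A G : Matrix n n K} (hA : IsUnit A.det) (hG : IsUnit G.det) :
    (A⁻¹ + (G * A⁻¹ * G)⁻¹)⁻¹ = G * (A + G * A⁻¹ * G)⁻¹ * G := by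
  have h : A⁻¹ + (G * A⁻¹ * G)⁻¹ = G⁻¹ * (A + G * A⁻¹ * G) * G⁻¹ := by
    rw [mul_inv_rev, mul_inv_rev, nonsing_inv_nonsing_inv _ hA, add_comm, mul_add, add_mul]
    simp only [mul_assoc, nonsing_inv_mul_cancel_left _ _ hG, mul_nonsing_inv _ hG, mul_one]
  rw [h, mul_inv_rev, mul_inv_rev, nonsing_inv_nonsing_inv _ hG, ← mul_assoc]

theorem harmMean_conj_inv {A G : Matrix n n K} (hA : IsUnit A.det) (hG : IsUnit G.det) :
    harmMean A (G * A⁻¹ * G) = G * (arithMean A (G * A⁻¹ * G))⁻¹ * G := by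
  rw [harmMean, arithMean, inv_add_inv_conj hA hG, inv_smul₀, inv_inv, Matrix.mul_smul,
    Matrix.smul_mul]

end Field

variable {A B G : Matrix n n ℂ}

theorem PosDef.arithMean (hA : A.PosDef) (hB : B.PosSemidef) : (arithMean A B).PosDef :=
  (hA.add_posSemidef hB).smul (by positivity)

theorem arithMean_le_left (h : B ≤ A) : arithMean A B ≤ A := by
  rw [le_iff, arithMean,
    show A - (2 : ℂ)⁻¹ • (A + B) = (2 : ℂ)⁻¹ • (A - B) by module]
  exact (le_iff.mp h).smul (by positivity)

variable [Fintype n] [DecidableEq n]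

theorem PosSemidef.sqrt_eq_cfcSqrt (hA : A.PosSemidef) : hA.sqrt = CFC.sqrt A := by
  rw [CFC.sqrt_eq_real_sqrt A hA.nonneg, cfcₙ_eq_cfc, hA.1.cfc_eq, IsHermitian.cfc,
    Unitary.conjStarAlgAut_apply]
  rfl

open scoped Matrix.Norms.L2Operator in
theorem inv_le_inv_of_le {X Y : Matrix n n ℂ} (hX : X.PosDef) (h : X ≤ Y) : Y⁻¹ ≤ X⁻¹ := by
  have hY : Y.PosDef := add_sub_cancel X Y ▸ hX.add_posSemidef h
  lift X to (Matrix n n ℂ)ˣ using hX.isUnit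
  lift Y to (Matrix n n ℂ)ˣ using hY.isUnit
  rw [← coe_units_inv, ← coe_units_inv]
  exact CStarAlgebra.inv_le_inv hX.posSemidef.nonneg h

theorem le_arithMean_conj_inv (hA : A.PosDef) (hG : G.IsHermitian) :
    G ≤ arithMean A (G * A⁻¹ * G) := by
  have hAdet : IsUnit A.det := (isUnit_iff_isUnit_det A).mp hA.isUnit
  have hsq : (A - G)ᴴ * A⁻¹ * (A - G) = A - G - G + G * A⁻¹ * G := by
    simp only [conjTranspose_sub, hA.isHermitian.eq, hG.eq, sub_mul, mul_sub,
      mul_nonsing_inv _ hAdet, one_mul, nonsing_inv_mul_cancel_right _ _ hAdet]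
    abel
  rw [le_iff, arithMean,
    show (2 : ℂ)⁻¹ • (A + G * A⁻¹ * G) - G = (2 : ℂ)⁻¹ • (A - G - G + G * A⁻¹ * G) by module,
    ← hsq]
  exact (hA.inv.posSemidef.conjTranspose_mul_mul_same _).smul (by positivity)

end Matrix

section GeomMean

variable {n : ℕ} {A B : Matrix (Fin n) (Fin n) ℂ}

theorem geomMean_eq_cfcSqrt (hA : A.PosDef) (hB : B.PosDef) :
    geomMean hA hB =
      CFC.sqrt A * CFC.sqrt ((CFC.sqrt A)⁻¹ * B * (CFC.sqrt A)⁻¹) * CFC.sqrt A := by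
  simp only [geomMean, PosSemidef.sqrt_eq_cfcSqrt]

theorem geomMean_mul_inv_mul_geomMean (hA : A.PosDef) (hB : B.PosDef) :
    geomMean hA hB * A⁻¹ * geomMean hA hB = B := by
  rw [geomMean_eq_cfcSqrt]
  set R := CFC.sqrt A
  set S := CFC.sqrt (R⁻¹ * B * R⁻¹)
  have hR : IsUnit R.det := (isUnit_iff_isUnit_det R).mp
    ((CFC.isUnit_sqrt_iff A hA.posSemidef.nonneg).mpr hA.isUnit)
  have hRR : R * R = A := CFC.sqrt_mul_sqrt_self A hA.posSemidef.nonneg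
  have hSS : S * S = R⁻¹ * B * R⁻¹ := CFC.sqrt_mul_sqrt_self _
    (conjugate_nonneg_of_nonneg hB.posSemidef.nonneg (CFC.sqrt_nonneg A).posSemidef.inv.nonneg)
  rw [← hRR]
  calc R * S * R * (R * R)⁻¹ * (R * S * R) = R * (S * S) * R := by
        simp only [Matrix.mul_inv_rev, mul_assoc, mul_nonsing_inv_cancel_left _ _ hR,
          nonsing_inv_mul_cancel_left _ _ hR]
    _ = B := by
        simp only [hSS, mul_assoc, mul_nonsing_inv_cancel_left _ _ hR, nonsing_inv_mul _ hR,
          mul_one]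

theorem geomMean_posDef (hA : A.PosDef) (hB : B.PosDef) : (geomMean hA hB).PosDef := by
  rw [geomMean_eq_cfcSqrt]
  set R := CFC.sqrt A
  have hR : IsUnit R := (CFC.isUnit_sqrt_iff A hA.posSemidef.nonneg).mpr hA.isUnit
  have hRinv : IsUnit R⁻¹ := isUnit_nonsing_inv_iff.mpr hR
  have hC : 0 ≤ R⁻¹ * B * R⁻¹ :=
    conjugate_nonneg_of_nonneg hB.posSemidef.nonneg (CFC.sqrt_nonneg A).posSemidef.inv.nonneg
  have hS : IsUnit (CFC.sqrt (R⁻¹ * B * R⁻¹)) :=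
    (CFC.isUnit_sqrt_iff _ hC).mpr ((hRinv.mul hB.isUnit).mul hRinv)
  exact ((conjugate_nonneg_of_nonneg (CFC.sqrt_nonneg _) (CFC.sqrt_nonneg A)).posSemidef
    |>.posDef_iff_isUnit).mpr ((hR.mul hS).mul hR)

end GeomMean

theorem posDef_and_eq_mul_inv_mul_of_averaging {n : Type*} [Fintype n] [DecidableEq n]
    {G : Matrix n n ℂ} (hG : G.PosDef) (As Bs : ℕ → Matrix n n ℂ) (hA0 : (As 0).PosDef)
    (hB0 : Bs 0 = G * (As 0)⁻¹ * G)
    (hArec : ∀ k, As (k + 1) = arithMean (As k) (Bs k))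
    (hBrec : ∀ k, Bs (k + 1) = harmMean (As k) (Bs k)) :
    ∀ k, (As k).PosDef ∧ Bs k = G * (As k)⁻¹ * G := by
  have hGdet : IsUnit G.det := (isUnit_iff_isUnit_det G).mp hG.isUnit
  intro k
  induction k with
  | zero => exact ⟨hA0, hB0⟩
  | succ k ih =>
    obtain ⟨hAk, hBk⟩ := ih
    have hAk' : IsUnit (As k).det := (isUnit_iff_isUnit_det _).mp hAk.isUnit
    refine ⟨hArec k ▸ hAk.arithMean (hBk ▸ ?_), ?_⟩
    · exact (conjugate_nonneg_of_nonneg hAk.inv.posSemidef.nonneg hG.posSemidef.nonneg).posSemidef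
    · rw [hBrec, hArec, hBk, harmMean_conj_inv hAk' hGdet]

/-- Monotonic convergence of the averaging iteration in the Loewner order:
`A_k ≽ A_{k+1} ≽ A # B ≽ B_{k+1} ≽ B_k` for `k ≥ 1`. -/
theorem averaging_monotone {n : ℕ} {A B : Matrix (Fin n) (Fin n) ℂ}
    (hA : A.PosDef) (hB : B.PosDef)
    (As Bs : ℕ → Matrix (Fin n) (Fin n) ℂ)
    (hA0 : As 0 = A) (hB0 : Bs 0 = B)
    (hArec : ∀ k, As (k + 1) = (2 : ℂ)⁻¹ • (As k + Bs k))
    (hBrec : ∀ k, Bs (k + 1) = (2 : ℂ) • ((As k)⁻¹ + (Bs k)⁻¹)⁻¹) :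
    ∀ k, 1 ≤ k →
      (As k - As (k + 1)).PosSemidef ∧
      (As (k + 1) - geomMean hA hB).PosSemidef ∧
      (geomMean hA hB - Bs (k + 1)).PosSemidef ∧
      (Bs (k + 1) - Bs k).PosSemidef := by
  set G := geomMean hA hB
  have hG : G.PosDef := geomMean_posDef hA hB
  have hAB := posDef_and_eq_mul_inv_mul_of_averaging hG As Bs (hA0 ▸ hA)
    (by rw [hA0, hB0, geomMean_mul_inv_mul_geomMean]) hArec hBrec
  have conj_anti {X Y : Matrix (Fin n) (Fin n) ℂ} (hX : X.PosDef) (h : X ≤ Y) :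
      G * Y⁻¹ * G ≤ G * X⁻¹ * G :=
    hG.isHermitian.isSelfAdjoint.conjugate_le_conjugate (inv_le_inv_of_le hX h)
  have G_le_A (k : ℕ) : G ≤ As (k + 1) := by
    rw [hArec, (hAB k).2]
    exact le_arithMean_conj_inv (hAB k).1 hG.isHermitian
  have B_le_G (k : ℕ) : Bs (k + 1) ≤ G := calc
    Bs (k + 1) = G * (As (k + 1))⁻¹ * G := (hAB _).2
    _ ≤ G * G⁻¹ * G := conj_anti hG (G_le_A k)
    _ = G := by rw [mul_nonsing_inv _ ((isUnit_iff_isUnit_det G).mp hG.isUnit), one_mul]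
  intro k hk
  obtain ⟨j, rfl⟩ := Nat.exists_eq_add_of_le' hk
  have A_anti : As (j + 1 + 1) ≤ As (j + 1) := by
    rw [hArec (j + 1)]
    exact arithMean_le_left ((B_le_G j).trans (G_le_A j))
  refine ⟨le_iff.mp A_anti, le_iff.mp (G_le_A _), le_iff.mp (B_le_G _), le_iff.mp ?_⟩
  rw [(hAB (j + 1)).2, (hAB (j + 1 + 1)).2]
  exact conj_anti (hAB _).1 A_anti
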